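/- Let J be any coupling of probability measures P₀ and P₁ on ℝ, each with finite second moment, with quantile functions F₀⁻¹, F₁⁻¹. Then ∫ y₀ y₁ dJ(y₀, y₁) ≥ ∫₀¹ F₀⁻¹(1 − u) F₁⁻¹(u) du, and equality holds when J is the antitone coupling, i.e. the pushforward of Lebesgue measure on (0,1) under u ↦ (F₀⁻¹(1 − u), F₁⁻¹(u)). -/

import Mathlib

/-!
Hoeffding's identity `x y = ∫∫ k(x, s) k(y, t) ds dt`, with `k(x, s) = 1{s < x} - 1{s < 0}`,
turns the cross moment of a coupling `J` into `∫∫ J((s, ∞) × (t, ∞)) ds dt` plus terms that only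
depend on the marginals, so it is monotone in the joint survival function. Every coupling obeys
the Fréchet bound `J((s, ∞) × (t, ∞)) ≥ P₀(s, ∞) - P₁(-∞, t]`, and the antitone coupling attains
it: as `s < F₀⁻¹(1 - u) ↔ u < 1 - F₀(s)` and `t < F₁⁻¹(u) ↔ F₁(t) < u`, its survival function is
the length of `(F₁(t), 1 - F₀(s))`.
-/

open MeasureTheory Set Filter

/-- The cumulative distribution function of a measure on ℝ. -/
noncomputable def cdf (P : MeasureTheory.Measure ℝ) (y : ℝ) : ℝ := (P (Set.Iic y)).toReal

/-- The quantile function (generalized inverse cdf) of a measure on ℝ. -/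
noncomputable def quantile (P : MeasureTheory.Measure ℝ) (u : ℝ) : ℝ :=
  sInf {y : ℝ | u ≤ cdf P y}

open scoped Topology

instance : IsProbabilityMeasure (volume.restrict (Ioo (0 : ℝ) 1)) :=
  ⟨by rw [Measure.restrict_apply_univ, Real.volume_Ioo, sub_zero, ENNReal.ofReal_one]⟩

lemma ext_of_Ioi_of_isProbabilityMeasure {μ ν : Measure ℝ} [IsProbabilityMeasure μ]
    [IsProbabilityMeasure ν] (h : ∀ a, μ (Ioi a) = ν (Ioi a)) : μ = ν :=
  Measure.ext_of_Iic μ ν fun a => by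
    rw [← compl_Ioi, prob_compl_eq_one_sub measurableSet_Ioi,
      prob_compl_eq_one_sub measurableSet_Ioi, h]

section Quantile

lemma cdf_nonneg (P : Measure ℝ) (y : ℝ) : 0 ≤ cdf P y := ENNReal.toReal_nonneg

lemma ofReal_cdf (P : Measure ℝ) [IsFiniteMeasure P] (y : ℝ) :
    ENNReal.ofReal (cdf P y) = P (Iic y) :=
  ENNReal.ofReal_toReal (measure_ne_top P _)

variable {P : Measure ℝ} [IsProbabilityMeasure P]

lemma cdf_eq_probabilityTheory_cdf : cdf P = ProbabilityTheory.cdf P :=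
  funext fun y => (ProbabilityTheory.cdf_eq_real P y).symm

lemma ofReal_one_sub_cdf (y : ℝ) : ENNReal.ofReal (1 - cdf P y) = P (Ioi y) := by
  rw [ENNReal.ofReal_sub _ (cdf_nonneg P y), ENNReal.ofReal_one, ofReal_cdf P,
    ← prob_compl_eq_one_sub measurableSet_Iic, compl_Iic]

lemma quantile_le_iff {u : ℝ} (hu : u ∈ Ioo 0 1) {y : ℝ} :
    quantile P u ≤ y ↔ u ≤ cdf P y := by
  have hne : {y | u ≤ cdf P y}.Nonempty := by
    rw [cdf_eq_probabilityTheory_cdf]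
    exact ((ProbabilityTheory.tendsto_cdf_atTop P).eventually (eventually_ge_nhds hu.2)).exists
  have hbdd : BddBelow {y | u ≤ cdf P y} := by
    rw [cdf_eq_probabilityTheory_cdf]
    obtain ⟨b, hb⟩ := eventually_atBot.1
      ((ProbabilityTheory.tendsto_cdf_atBot P).eventually (eventually_lt_nhds hu.1))
    exact ⟨b, fun z hz => le_of_not_gt fun hzb => (hb z hzb.le).not_ge hz⟩
  refine ⟨fun h => ?_, fun h => csInf_le hbdd h⟩
  have h_right : ∀ z, y < z → u ≤ cdf P z := fun z hz => by
    obtain ⟨w, hw, hwz⟩ := exists_lt_of_csInf_lt hne (h.trans_lt hz)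
    rw [cdf_eq_probabilityTheory_cdf] at hw ⊢
    exact hw.trans ((ProbabilityTheory.cdf P).mono hwz.le)
  have h_cont : Tendsto (cdf P) (𝓝[>] y) (𝓝 (cdf P y)) := by
    rw [cdf_eq_probabilityTheory_cdf]
    exact ((ProbabilityTheory.cdf P).right_continuous y).mono_left
      (nhdsWithin_mono y Ioi_subset_Ici_self)
  exact ge_of_tendsto h_cont (eventually_mem_nhdsWithin.mono h_right)

lemma lt_quantile_iff {u : ℝ} (hu : u ∈ Ioo 0 1) {y : ℝ} :
    y < quantile P u ↔ cdf P y < u := by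
  simpa only [not_le] using (quantile_le_iff hu).not

lemma monotoneOn_quantile : MonotoneOn (quantile P) (Ioo 0 1) := fun _ hu _ hv huv =>
  (quantile_le_iff hu).2 (huv.trans ((quantile_le_iff hv).1 le_rfl))

lemma aemeasurable_quantile : AEMeasurable (quantile P) (volume.restrict (Ioo 0 1)) :=
  aemeasurable_restrict_of_monotoneOn measurableSet_Ioo monotoneOn_quantile

lemma aemeasurable_quantile_one_sub :
    AEMeasurable (fun u => quantile P (1 - u)) (volume.restrict (Ioo 0 1)) := by
  refine aemeasurable_restrict_of_antitoneOn measurableSet_Ioo fun u hu v hv huv => ?_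
  exact monotoneOn_quantile ⟨by linarith [hv.2], by linarith [hv.1]⟩
    ⟨by linarith [hu.2], by linarith [hu.1]⟩ (by linarith)

lemma quantile_preimage_Ioi_inter (s : ℝ) :
    quantile P ⁻¹' Ioi s ∩ Ioo 0 1 = Ioo (cdf P s) 1 := by
  ext u
  refine ⟨fun ⟨hs, hu⟩ => ⟨(lt_quantile_iff hu).1 hs, hu.2⟩, fun ⟨hs, hu⟩ => ?_⟩
  have hu' : u ∈ Ioo 0 1 := ⟨(cdf_nonneg P s).trans_lt hs, hu⟩
  exact ⟨(lt_quantile_iff hu').2 hs, hu'⟩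

lemma quantile_one_sub_preimage_Ioi_inter (s : ℝ) :
    (fun u => quantile P (1 - u)) ⁻¹' Ioi s ∩ Ioo 0 1 = Ioo 0 (1 - cdf P s) := by
  ext u
  simp only [mem_inter_iff, mem_preimage, mem_Ioi, mem_Ioo]
  constructor
  · rintro ⟨hs, hu₀, hu₁⟩
    have := (lt_quantile_iff ⟨sub_pos.2 hu₁, sub_lt_self 1 hu₀⟩).1 hs
    exact ⟨hu₀, by linarith⟩
  · rintro ⟨hu₀, hs⟩
    have hu₁ : u < 1 := by linarith [cdf_nonneg P s]
    exact ⟨(lt_quantile_iff ⟨sub_pos.2 hu₁, sub_lt_self 1 hu₀⟩).2 (by linarith), hu₀, hu₁⟩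

lemma map_quantile : (volume.restrict (Ioo 0 1)).map (quantile P) = P := by
  have := Measure.isProbabilityMeasure_map (aemeasurable_quantile (P := P))
  refine ext_of_Ioi_of_isProbabilityMeasure fun s => ?_
  rw [Measure.map_apply_of_aemeasurable aemeasurable_quantile measurableSet_Ioi,
    Measure.restrict_apply' measurableSet_Ioo, quantile_preimage_Ioi_inter, Real.volume_Ioo,
    ofReal_one_sub_cdf]

lemma map_quantile_one_sub :
    (volume.restrict (Ioo 0 1)).map (fun u => quantile P (1 - u)) = P := by
  have := Measure.isProbabilityMeasure_map (aemeasurable_quantile_one_sub (P := P))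
  refine ext_of_Ioi_of_isProbabilityMeasure fun s => ?_
  rw [Measure.map_apply_of_aemeasurable aemeasurable_quantile_one_sub measurableSet_Ioi,
    Measure.restrict_apply' measurableSet_Ioo, quantile_one_sub_preimage_Ioi_inter,
    Real.volume_Ioo, sub_zero, ofReal_one_sub_cdf]

end Quantile

section Hoeffding

noncomputable def hoeffdingKernel (x s : ℝ) : ℝ :=
  (Ico 0 x).indicator 1 s - (Ico x 0).indicator 1 s

lemma hoeffdingKernel_eq (x s : ℝ) :
    hoeffdingKernel x s = (Ioi s).indicator 1 x - (Iio 0).indicator 1 s := by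
  simp only [hoeffdingKernel, indicator_apply, mem_Ico, mem_Ioi, mem_Iio, Pi.one_apply]
  split_ifs <;> grind

lemma abs_hoeffdingKernel (x s : ℝ) :
    |hoeffdingKernel x s| = (Ico 0 x).indicator 1 s + (Ico x 0).indicator 1 s := by
  simp only [hoeffdingKernel, indicator_apply, mem_Ico, Pi.one_apply]
  split_ifs <;> grind

lemma integrable_indicator_one_Ico (a b : ℝ) :
    Integrable ((Ico a b).indicator (1 : ℝ → ℝ)) :=
  (integrableOn_const measure_Ico_lt_top.ne).integrable_indicator measurableSet_Ico

lemma integrable_hoeffdingKernel (x : ℝ) : Integrable (hoeffdingKernel x) :=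
  (integrable_indicator_one_Ico 0 x).sub (integrable_indicator_one_Ico x 0)

lemma integral_hoeffdingKernel (x : ℝ) : ∫ s, hoeffdingKernel x s = x := by
  simp_rw [hoeffdingKernel]
  rw [integral_sub (integrable_indicator_one_Ico 0 x) (integrable_indicator_one_Ico x 0),
    integral_indicator_one measurableSet_Ico,
    integral_indicator_one measurableSet_Ico, Real.volume_real_Ico, Real.volume_real_Ico,
    sub_zero, zero_sub, max_zero_sub_eq_self]

lemma integral_abs_hoeffdingKernel (x : ℝ) : ∫ s, |hoeffdingKernel x s| = |x| := by
  simp_rw [abs_hoeffdingKernel]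
  rw [integral_add (integrable_indicator_one_Ico 0 x) (integrable_indicator_one_Ico x 0),
    integral_indicator_one measurableSet_Ico, integral_indicator_one measurableSet_Ico,
    Real.volume_real_Ico, Real.volume_real_Ico, sub_zero, zero_sub,
    max_zero_add_max_neg_zero_eq_abs_self]

lemma measurable_hoeffdingKernel : Measurable fun q : ℝ × ℝ => hoeffdingKernel q.1 q.2 := by
  simp_rw [hoeffdingKernel_eq]
  exact (measurable_const.indicator (measurableSet_lt measurable_snd measurable_fst)).sub
    ((measurable_const.indicator measurableSet_Iio).comp measurable_snd)

variable {μ : Measure (ℝ × ℝ)}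

lemma integrable_hoeffdingKernel_mul_prod [SFinite μ]
    (hμ : Integrable (fun p : ℝ × ℝ => p.1 * p.2) μ) :
    Integrable (fun z : (ℝ × ℝ) × (ℝ × ℝ) =>
      hoeffdingKernel z.1.1 z.2.1 * hoeffdingKernel z.1.2 z.2.2) (μ.prod volume) := by
  have hmeas : Measurable fun z : (ℝ × ℝ) × (ℝ × ℝ) =>
      hoeffdingKernel z.1.1 z.2.1 * hoeffdingKernel z.1.2 z.2.2 :=
    (measurable_hoeffdingKernel.comp (measurable_fst.fst.prodMk measurable_snd.fst)).mul
      (measurable_hoeffdingKernel.comp (measurable_fst.snd.prodMk measurable_snd.snd))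
  rw [integrable_prod_iff hmeas.aestronglyMeasurable, Measure.volume_eq_prod]
  refine ⟨ae_of_all _ fun p => (integrable_hoeffdingKernel p.1).mul_prod
    (integrable_hoeffdingKernel p.2), ?_⟩
  refine hμ.abs.congr (ae_of_all _ fun p => ?_)
  simp only [norm_mul, Real.norm_eq_abs]
  rw [integral_prod_mul (fun s => |hoeffdingKernel p.1 s|) (fun t => |hoeffdingKernel p.2 t|),
    integral_abs_hoeffdingKernel, integral_abs_hoeffdingKernel, abs_mul]

/-- Hoeffding's identity `x y = ∫∫ k(x, s) k(y, t) ds dt`, averaged over `μ`. -/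
lemma integral_fst_mul_snd_eq_integral_integral_hoeffdingKernel [SFinite μ]
    (hμ : Integrable (fun p : ℝ × ℝ => p.1 * p.2) μ) :
    ∫ p, p.1 * p.2 ∂μ = ∫ q : ℝ × ℝ, ∫ p, hoeffdingKernel p.1 q.1 * hoeffdingKernel p.2 q.2 ∂μ := by
  rw [← integral_integral_swap (integrable_hoeffdingKernel_mul_prod hμ)]
  refine integral_congr_ae (ae_of_all _ fun p => ?_)
  simp only [Measure.volume_eq_prod, integral_prod_mul (hoeffdingKernel p.1) (hoeffdingKernel p.2),
    integral_hoeffdingKernel]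

lemma integral_hoeffdingKernel_mul [IsProbabilityMeasure μ] (s t : ℝ) :
    ∫ p, hoeffdingKernel p.1 s * hoeffdingKernel p.2 t ∂μ =
      μ.real (Ioi s ×ˢ Ioi t) - (Iio 0).indicator 1 t * (μ.map Prod.fst).real (Ioi s)
        - (Iio 0).indicator 1 s * (μ.map Prod.snd).real (Ioi t)
        + (Iio 0).indicator 1 s * (Iio 0).indicator 1 t := by
  set c : ℝ → ℝ := (Iio 0).indicator 1
  have h_expand : ∀ p : ℝ × ℝ, hoeffdingKernel p.1 s * hoeffdingKernel p.2 t =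
      (Ioi s ×ˢ Ioi t).indicator 1 p - c t * (Ioi s ×ˢ univ).indicator 1 p
        - c s * (univ ×ˢ Ioi t).indicator 1 p + c s * c t := by
    rintro ⟨x, y⟩
    simp only [hoeffdingKernel_eq, indicator_prod_one, indicator_univ, Pi.one_apply]
    ring
  have h_int : ∀ A : Set (ℝ × ℝ), MeasurableSet A → Integrable (A.indicator (1 : ℝ × ℝ → ℝ)) μ :=
    fun A hA => (integrable_const (1 : ℝ)).indicator hA
  have hA := h_int (Ioi s ×ˢ Ioi t) (measurableSet_Ioi.prod measurableSet_Ioi)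
  have hB := (h_int (Ioi s ×ˢ univ) (measurableSet_Ioi.prod .univ)).const_mul (c t)
  have hC := (h_int (univ ×ˢ Ioi t) (MeasurableSet.univ.prod measurableSet_Ioi)).const_mul (c s)
  have hAB : Integrable (fun p => (Ioi s ×ˢ Ioi t).indicator 1 p
      - c t * (Ioi s ×ˢ univ).indicator 1 p) μ := hA.sub hB
  have hABC : Integrable (fun p => (Ioi s ×ˢ Ioi t).indicator 1 p
      - c t * (Ioi s ×ˢ univ).indicator 1 p - c s * (univ ×ˢ Ioi t).indicator 1 p) μ := hAB.sub hC
  simp_rw [h_expand]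
  rw [integral_add hABC (integrable_const _), integral_sub hAB hC, integral_sub hA hB,
    integral_const_mul, integral_const_mul,
    integral_indicator_one (measurableSet_Ioi.prod measurableSet_Ioi),
    integral_indicator_one (measurableSet_Ioi.prod MeasurableSet.univ),
    integral_indicator_one (MeasurableSet.univ.prod measurableSet_Ioi), integral_const,
    map_measureReal_apply measurable_fst measurableSet_Ioi,
    map_measureReal_apply measurable_snd measurableSet_Ioi, prod_univ, univ_prod, probReal_univ,
    one_smul]

theorem integral_fst_mul_snd_le_of_measure_Ioi_prod_Ioi_le {μ ν : Measure (ℝ × ℝ)}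
    [IsProbabilityMeasure μ] [IsProbabilityMeasure ν] (hfst : μ.map Prod.fst = ν.map Prod.fst)
    (hsnd : μ.map Prod.snd = ν.map Prod.snd) (hμ : Integrable (fun p : ℝ × ℝ => p.1 * p.2) μ)
    (hν : Integrable (fun p : ℝ × ℝ => p.1 * p.2) ν)
    (hle : ∀ s t, μ (Ioi s ×ˢ Ioi t) ≤ ν (Ioi s ×ˢ Ioi t)) :
    ∫ p, p.1 * p.2 ∂μ ≤ ∫ p, p.1 * p.2 ∂ν := by
  rw [integral_fst_mul_snd_eq_integral_integral_hoeffdingKernel hμ,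
    integral_fst_mul_snd_eq_integral_integral_hoeffdingKernel hν]
  refine integral_mono (integrable_hoeffdingKernel_mul_prod hμ).integral_prod_right
    (integrable_hoeffdingKernel_mul_prod hν).integral_prod_right fun q => ?_
  have h_joint : μ.real (Ioi q.1 ×ˢ Ioi q.2) ≤ ν.real (Ioi q.1 ×ˢ Ioi q.2) :=
    ENNReal.toReal_mono (measure_ne_top ν _) (hle q.1 q.2)
  simp only [integral_hoeffdingKernel_mul, hfst, hsnd]
  linarith

end Hoeffding

lemma integrable_fst_mul_snd {μ : Measure (ℝ × ℝ)}
    (h₁ : Integrable (fun y : ℝ => y ^ 2) (μ.map Prod.fst))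
    (h₂ : Integrable (fun y : ℝ => y ^ 2) (μ.map Prod.snd)) :
    Integrable (fun p : ℝ × ℝ => p.1 * p.2) μ := by
  have hL2 : ∀ {f : ℝ × ℝ → ℝ}, Measurable f → Integrable (fun y : ℝ => y ^ 2) (μ.map f) →
      MemLp f 2 μ := fun hf h =>
    (memLp_map_measure_iff aestronglyMeasurable_id hf.aemeasurable).1
      ((memLp_two_iff_integrable_sq aestronglyMeasurable_id).2 h)
  exact (hL2 measurable_fst h₁).integrable_mul (hL2 measurable_snd h₂)

lemma map_fst_sub_map_snd_compl_le {α β : Type*} [MeasurableSpace α] [MeasurableSpace β]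
    (μ : Measure (α × β)) {A : Set α} {B : Set β} (hA : MeasurableSet A) (hB : MeasurableSet B) :
    μ.map Prod.fst A - μ.map Prod.snd Bᶜ ≤ μ (A ×ˢ B) := by
  rw [Measure.map_apply measurable_fst hA, Measure.map_apply measurable_snd hB.compl,
    tsub_le_iff_right, ← prod_univ, ← univ_prod]
  refine (measure_mono fun p hp => ?_).trans (measure_union_le _ _)
  by_cases hpB : p.2 ∈ B
  · exact Or.inl ⟨hp.1, hpB⟩
  · exact Or.inr ⟨trivial, hpB⟩

noncomputable def antitoneCoupling (P₀ P₁ : Measure ℝ) : Measure (ℝ × ℝ) :=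
  (volume.restrict (Ioo 0 1)).map fun u => (quantile P₀ (1 - u), quantile P₁ u)

section AntitoneCoupling

variable {P₀ P₁ : Measure ℝ} [IsProbabilityMeasure P₀] [IsProbabilityMeasure P₁]

lemma aemeasurable_quantile_one_sub_prodMk_quantile :
    AEMeasurable (fun u => (quantile P₀ (1 - u), quantile P₁ u)) (volume.restrict (Ioo 0 1)) :=
  aemeasurable_quantile_one_sub.prodMk aemeasurable_quantile

instance : IsProbabilityMeasure (antitoneCoupling P₀ P₁) :=
  Measure.isProbabilityMeasure_map aemeasurable_quantile_one_sub_prodMk_quantile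

lemma antitoneCoupling_map_fst : (antitoneCoupling P₀ P₁).map Prod.fst = P₀ := by
  rw [antitoneCoupling, AEMeasurable.map_map_of_aemeasurable measurable_fst.aemeasurable
    aemeasurable_quantile_one_sub_prodMk_quantile]
  exact map_quantile_one_sub

lemma antitoneCoupling_map_snd : (antitoneCoupling P₀ P₁).map Prod.snd = P₁ := by
  rw [antitoneCoupling, AEMeasurable.map_map_of_aemeasurable measurable_snd.aemeasurable
    aemeasurable_quantile_one_sub_prodMk_quantile]
  exact map_quantile

-- The truncated subtraction of `ℝ≥0∞` makes the right-hand side `(1 - F₀(s) - F₁(t))⁺`.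
lemma antitoneCoupling_Ioi_prod_Ioi (s t : ℝ) :
    antitoneCoupling P₀ P₁ (Ioi s ×ˢ Ioi t) = P₀ (Ioi s) - P₁ (Iic t) := by
  rw [antitoneCoupling, Measure.map_apply_of_aemeasurable
    aemeasurable_quantile_one_sub_prodMk_quantile (measurableSet_Ioi.prod measurableSet_Ioi),
    Measure.restrict_apply' measurableSet_Ioo, mk_preimage_prod, inter_inter_distrib_right,
    quantile_one_sub_preimage_Ioi_inter, quantile_preimage_Ioi_inter, Ioo_inter_Ioo,
    max_eq_right (cdf_nonneg P₁ t), min_eq_left (sub_le_self 1 (cdf_nonneg P₀ s)), Real.volume_Ioo,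
    ENNReal.ofReal_sub _ (cdf_nonneg P₁ t), ofReal_one_sub_cdf, ofReal_cdf]

lemma antitoneCoupling_Ioi_prod_Ioi_le {J : Measure (ℝ × ℝ)} (h₀ : J.map Prod.fst = P₀)
    (h₁ : J.map Prod.snd = P₁) (s t : ℝ) :
    antitoneCoupling P₀ P₁ (Ioi s ×ˢ Ioi t) ≤ J (Ioi s ×ˢ Ioi t) := by
  rw [antitoneCoupling_Ioi_prod_Ioi, ← h₀, ← h₁, ← compl_Ioi]
  exact map_fst_sub_map_snd_compl_le J measurableSet_Ioi measurableSet_Ioi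

lemma integral_fst_mul_snd_antitoneCoupling :
    ∫ p, p.1 * p.2 ∂antitoneCoupling P₀ P₁ =
      ∫ u in Ioo 0 1, quantile P₀ (1 - u) * quantile P₁ u :=
  integral_map aemeasurable_quantile_one_sub_prodMk_quantile
    (measurable_fst.mul measurable_snd).aestronglyMeasurable

end AntitoneCoupling

/-- Lower Fréchet–Hoeffding bound on the cross moment; attained by the antitone coupling. -/
theorem cross_moment_lower_bound
    (P0 P1 : Measure ℝ) [IsProbabilityMeasure P0] [IsProbabilityMeasure P1]
    (hm0 : Integrable (fun y : ℝ => y ^ 2) P0) (hm1 : Integrable (fun y : ℝ => y ^ 2) P1)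
    (J : Measure (ℝ × ℝ)) [IsProbabilityMeasure J]
    (h0 : J.map Prod.fst = P0) (h1 : J.map Prod.snd = P1) :
    ((∫ u in Ioo (0:ℝ) 1, quantile P0 (1 - u) * quantile P1 u) ≤ ∫ p : ℝ × ℝ, p.1 * p.2 ∂J) ∧
    (J = (volume.restrict (Ioo (0:ℝ) 1)).map (fun u => (quantile P0 (1 - u), quantile P1 u)) →
      (∫ p : ℝ × ℝ, p.1 * p.2 ∂J) = ∫ u in Ioo (0:ℝ) 1, quantile P0 (1 - u) * quantile P1 u) := by
  refine ⟨?_, fun hJ => hJ ▸ integral_fst_mul_snd_antitoneCoupling⟩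
  rw [← integral_fst_mul_snd_antitoneCoupling]
  refine integral_fst_mul_snd_le_of_measure_Ioi_prod_Ioi_le
    (by rw [antitoneCoupling_map_fst, h0]) (by rw [antitoneCoupling_map_snd, h1]) ?_ ?_
    (antitoneCoupling_Ioi_prod_Ioi_le h0 h1)
  · exact integrable_fst_mul_snd (by rwa [antitoneCoupling_map_fst])
      (by rwa [antitoneCoupling_map_snd])
  · exact integrable_fst_mul_snd (by rwa [h0]) (by rwa [h1])
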